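/- Let 𝔛 be a complete class of finite groups, G a finite group and N a normal subgroup of G such that k_𝔛(G) = k_𝔛(G/N). Then: (1) for every 𝔛-maximal subgroup H of G, the image HN/N is an 𝔛-maximal subgroup of G/N; (2) every 𝔛-maximal subgroup of G/N is of the form HN/N for some 𝔛-maximal subgroup H of G; and (3) two 𝔛-maximal subgroups H and L of G are conjugate in G if and only if HN/N and LN/N are conjugate in G/N, so the map H ↦ HN/N induces a bijection between the conjugacy classes of 𝔛-maximal subgroups of G and those of G/N. -/

import Mathlib

open scoped Pointwise

/-- A class of (finite) groups, given as a property of group types. -/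
abbrev GroupClass : Type 1 := ∀ (G : Type) [Group G], Prop

/-- A complete class of finite groups: nonempty, closed under isomorphism,
subgroups, homomorphic images, and extensions. -/
def IsCompleteClass (X : GroupClass) : Prop :=
  (∃ (G : Type) (inst : Group G), Finite G ∧ @X G inst) ∧
  (∀ (G H : Type) [Group G] [Group H] [Finite G], (G ≃* H) → X G → X H) ∧
  (∀ (G : Type) [Group G] [Finite G], X G → ∀ H : Subgroup G, X ↥H) ∧
  (∀ (G H : Type) [Group G] [Group H] [Finite G] (φ : G →* H),
      Function.Surjective φ → X G → X H) ∧
  (∀ (G : Type) [Group G] [Finite G] (N : Subgroup G) [N.Normal],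
      X ↥N → X (G ⧸ N) → X G)

/-- The conjugate `g H g⁻¹` of a subgroup. -/
def conjSub {G : Type} [Group G] (g : G) (H : Subgroup G) : Subgroup G :=
  H.map (MulAut.conj g).toMonoidHom

/-- The number of conjugacy classes meeting a (conjugation-invariant) set of subgroups. -/
noncomputable def numClasses {G : Type} [Group G] (S : Set (Subgroup G)) : ℕ :=
  Nat.card {C : Set (Subgroup G) // ∃ H ∈ S, C = {K | ∃ g : G, K = conjSub g H}}

/-- An `𝔛`-maximal subgroup: an `𝔛`-subgroup maximal under inclusion among
`𝔛`-subgroups. -/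
def IsXMaximal (X : GroupClass) {G : Type} [Group G] (H : Subgroup G) : Prop :=
  X ↥H ∧ ∀ K : Subgroup G, X ↥K → H ≤ K → H = K

/-- `k_𝔛(G)`: the number of conjugacy classes of `𝔛`-maximal subgroups of `G`. -/
noncomputable def kX (X : GroupClass) (G : Type) [Group G] : ℕ :=
  numClasses {H : Subgroup G | IsXMaximal X H}

/-! Every `𝔛`-quotient `G/N` has an `𝔛`-supplement in `G`: in a minimal supplement `U` of `N`,
`U ∩ N` has no proper supplement, so by the Frattini argument its Sylow subgroups are normal in
`U`, Schur–Zassenhaus shows their primes divide `|G/N|`, so they are `p`-groups in `𝔛`, and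
induction on the order finishes. Consequently every `𝔛`-maximal subgroup of `G/N` is the image of
an `𝔛`-maximal subgroup of `G`, so `H ↦ HN/N`, restricted to those `𝔛`-maximal `H` whose image is
`𝔛`-maximal, induces a surjection onto the classes of `G/N`. When `k_𝔛(G) = k_𝔛(G/N)`, counting
forces these `H` to meet every class of `G` and the induced map to be injective. -/

namespace IsCompleteClass

variable {X : GroupClass} {A B : Type} [Group A] [Group B]

theorem of_mulEquiv (hX : IsCompleteClass X) [Finite A] (e : A ≃* B) (hA : X A) : X B :=
  hX.2.1 A B e hA

theorem subgroup (hX : IsCompleteClass X) [Finite A] (hA : X A) (H : Subgroup A) : X H :=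
  hX.2.2.1 A hA H

theorem of_surjective (hX : IsCompleteClass X) [Finite A] (f : A →* B)
    (hf : Function.Surjective f) (hA : X A) : X B :=
  hX.2.2.2.1 A B f hf hA

theorem of_normal_of_quotient (hX : IsCompleteClass X) [Finite A] (N : Subgroup A) [N.Normal]
    (hN : X N) (hQ : X (A ⧸ N)) : X A :=
  hX.2.2.2.2 A N hN hQ

theorem map (hX : IsCompleteClass X) [Finite A] (f : A →* B) {H : Subgroup A} (hH : X H) :
    X (H.map f) :=
  hX.of_surjective (f.subgroupMap H) (f.subgroupMap_surjective H) hH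

theorem of_subsingleton (hX : IsCompleteClass X) [Subsingleton A] : X A := by
  obtain ⟨G, _, _, hG⟩ := hX.1
  exact hX.of_surjective (1 : G →* A) (fun a => ⟨1, Subsingleton.elim _ _⟩) hG

variable {p : ℕ} [Fact p.Prime]

theorem of_card_eq_prime (hX : IsCompleteClass X) [Finite B] (hB : X B)
    (hpB : p ∣ Nat.card B) (hA : Nat.card A = p) : X A := by
  obtain ⟨b, hb⟩ := exists_prime_orderOf_dvd_card' p hpB
  exact hX.of_mulEquiv (mulEquivOfPrimeCardEq ((Nat.card_zpowers b).trans hb) hA)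
    (hX.subgroup hB _)

/-- A subgroup of index `p` in a `p`-group is normal, so `p`-groups are iterated extensions of
groups of order `p`. -/
theorem of_isPGroup (hX : IsCompleteClass X) [Finite B] (hB : X B) (hpB : p ∣ Nat.card B)
    [Finite A] (hA : IsPGroup p A) : X A := by
  obtain ⟨n, hn⟩ := IsPGroup.iff_card.mp hA
  induction n generalizing A with
  | zero =>
    have : Subsingleton A := (Nat.card_eq_one_iff_unique.mp hn).1
    exact hX.of_subsingleton
  | succ n ih =>
    obtain ⟨H, hH⟩ := Sylow.exists_subgroup_card_pow_prime p (n := n)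
      (hn ▸ pow_dvd_pow p n.le_succ)
    have hindex : H.index = p := by
      have h := H.card_mul_index
      rw [hH, hn, pow_succ] at h
      exact Nat.eq_of_mul_eq_mul_left (pow_pos (Fact.out : p.Prime).pos n) h
    have : H.Normal := Subgroup.normal_of_index_eq_minFac_card <| by
      rw [hindex, hn, Nat.Prime.pow_minFac Fact.out n.succ_ne_zero]
    exact hX.of_normal_of_quotient H (ih (hA.to_subgroup H) hH)
      (hX.of_card_eq_prime hB hpB (by rw [← Subgroup.index_eq_card, hindex]))

end IsCompleteClass

section Supplement

variable {G Q : Type} [Group G] [Group Q] {φ : G →* Q}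

theorem map_eq_top_of_sup_ker_eq_top (hφ : Function.Surjective φ) {M : Subgroup G}
    (hM : M ⊔ φ.ker = ⊤) : M.map φ = ⊤ :=
  Subgroup.comap_injective hφ (by rw [Subgroup.comap_map_eq, hM, Subgroup.comap_top])

theorem forall_map_lift_eq_top (hsupp : ∀ M : Subgroup G, M.map φ = ⊤ → M = ⊤)
    (K : Subgroup G) [K.Normal] (hK : K ≤ φ.ker) (M : Subgroup (G ⧸ K))
    (hM : M.map (QuotientGroup.lift K φ hK) = ⊤) : M = ⊤ := by
  have hmk := QuotientGroup.mk'_surjective K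
  have hcomap : M.comap (QuotientGroup.mk' K) = ⊤ := hsupp _ <| by
    rw [← QuotientGroup.lift_comp_mk' K φ hK, ← Subgroup.map_map,
      Subgroup.map_comap_eq_self_of_surjective hmk, hM]
  rw [← Subgroup.map_comap_eq_self_of_surjective hmk M, hcomap,
    Subgroup.map_top_of_surjective _ hmk]

variable {p : ℕ} [Fact p.Prime] [Finite G]

/-- The Frattini argument. -/
theorem normal_map_subtype_of_forall_map_eq_top (hφ : Function.Surjective φ)
    (hsupp : ∀ M : Subgroup G, M.map φ = ⊤ → M = ⊤) (P : Sylow p φ.ker) :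
    ((P : Subgroup φ.ker).map φ.ker.subtype).Normal :=
  Subgroup.normalizer_eq_top_iff.mp
    (hsupp _ (map_eq_top_of_sup_ker_eq_top hφ (Sylow.normalizer_sup_eq_top P)))

/-- Otherwise the normal Sylow subgroup `P` of `ker φ` would be a normal Hall subgroup of `G`,
and a Schur–Zassenhaus complement to it would be a proper supplement of `ker φ`. -/
theorem prime_dvd_card_of_forall_map_eq_top (hφ : Function.Surjective φ)
    (hsupp : ∀ M : Subgroup G, M.map φ = ⊤ → M = ⊤) (hp : p ∣ Nat.card φ.ker) :
    p ∣ Nat.card Q := by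
  obtain ⟨P⟩ : Nonempty (Sylow p φ.ker) := inferInstance
  set P' := (P : Subgroup φ.ker).map φ.ker.subtype
  have := normal_map_subtype_of_forall_map_eq_top hφ hsupp P
  have hcard : Nat.card P' = Nat.card P :=
    Subgroup.card_map_of_injective φ.ker.subtype_injective
  have hindex : φ.ker.index = Nat.card Q := by
    rw [Subgroup.index_ker, φ.range_eq_top_of_surjective hφ, Subgroup.card_top]
  by_contra hpQ
  have hcop : (Nat.card P').Coprime P'.index := by
    obtain ⟨n, hn⟩ := IsPGroup.iff_card.mp P.isPGroup'
    rw [Subgroup.index_map_subtype, hcard]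
    refine P.card_coprime_index.mul_right ?_
    rw [hn, hindex]
    exact Nat.Coprime.pow_left n ((Nat.Prime.coprime_iff_not_dvd Fact.out).mpr hpQ)
  obtain ⟨K, hK⟩ := Subgroup.exists_right_complement'_of_coprime hcop
  have hKN : K ⊔ φ.ker = ⊤ := by
    rw [eq_top_iff, ← hK.sup_eq_top, sup_comm]
    exact sup_le_sup_left (Subgroup.map_subtype_le _) K
  have hKtop : K = ⊤ := hsupp K (map_eq_top_of_sup_ker_eq_top hφ hKN)
  have hP'bot : P' = ⊥ := disjoint_top.mp (hKtop ▸ hK.disjoint)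
  exact P.ne_bot_of_dvd_card hp
    (Subgroup.map_injective φ.ker.subtype_injective (hP'bot.trans (Subgroup.map_bot _).symm))

end Supplement

namespace IsCompleteClass

variable {X : GroupClass} {G Q : Type} [Group G] [Group Q] [Finite G] {φ : G →* Q}

/-- Induction on `|G|`: a Sylow subgroup of `ker φ` is normal in `G` and a `p`-group for a prime
`p` dividing `|Q|`, hence in `𝔛`, and the quotient by it inherits the hypothesis. -/
theorem of_forall_map_eq_top (hX : IsCompleteClass X) (hφ : Function.Surjective φ) (hQ : X Q)
    (hsupp : ∀ M : Subgroup G, M.map φ = ⊤ → M = ⊤) : X G := by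
  induction hn : Nat.card G using Nat.strong_induction_on generalizing G with
  | _ n ih =>
  have : Finite Q := Finite.of_surjective φ hφ
  by_cases hker : φ.ker = ⊥
  · exact hX.of_mulEquiv (MulEquiv.ofBijective φ ⟨φ.ker_eq_bot_iff.mp hker, hφ⟩).symm hQ
  obtain ⟨p, hp, hpN⟩ := Nat.exists_prime_and_dvd (mt Subgroup.card_eq_one.mp hker)
  have := Fact.mk hp
  obtain ⟨P⟩ : Nonempty (Sylow p φ.ker) := inferInstance
  set P' := (P : Subgroup φ.ker).map φ.ker.subtype
  have := normal_map_subtype_of_forall_map_eq_top hφ hsupp P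
  have hP'ker : P' ≤ φ.ker := Subgroup.map_subtype_le _
  have hP'X : X P' := hX.of_isPGroup hQ (prime_dvd_card_of_forall_map_eq_top hφ hsupp hpN)
    (P.isPGroup'.map _)
  have hlt : Nat.card (G ⧸ P') < n := by
    have hP'card : 1 < Nat.card P' := by
      rw [Subgroup.card_map_of_injective φ.ker.subtype_injective]
      exact Nat.one_lt_iff_ne_zero_and_ne_one.mpr
        ⟨Nat.card_pos.ne', fun h => P.ne_bot_of_dvd_card hpN (Subgroup.card_eq_one.mp h)⟩
    rw [← hn, Subgroup.card_eq_card_quotient_mul_card_subgroup P']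
    exact lt_mul_of_one_lt_right Nat.card_pos hP'card
  exact hX.of_normal_of_quotient P' hP'X <|
    ih _ hlt (QuotientGroup.lift_surjective_of_surjective P' φ hφ hP'ker)
      (forall_map_lift_eq_top hsupp P' hP'ker) rfl

/-- Take a minimal supplement of `ker φ`. -/
theorem exists_map_eq_top (hX : IsCompleteClass X) (hφ : Function.Surjective φ) (hQ : X Q) :
    ∃ U : Subgroup G, X U ∧ U.map φ = ⊤ := by
  obtain ⟨U, hUtop, hUmin⟩ := (Set.toFinite {M : Subgroup G | M.map φ = ⊤}).exists_minimal
    ⟨⊤, Subgroup.map_top_of_surjective φ hφ⟩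
  refine ⟨U, hX.of_forall_map_eq_top (φ := φ.comp U.subtype) ?_ hQ fun M hM => ?_, hUtop⟩
  · rw [← MonoidHom.range_eq_top, MonoidHom.range_comp, Subgroup.range_subtype]
    exact hUtop
  · rw [← Subgroup.map_map] at hM
    have hle : U ≤ M.map U.subtype := hUmin hM (Subgroup.map_subtype_le M)
    refine top_le_iff.mp ?_
    calc ⊤ = U.subgroupOf U := U.subgroupOf_self.symm
      _ ≤ (M.map U.subtype).subgroupOf U := Subgroup.comap_mono hle
      _ = M := Subgroup.comap_map_eq_self_of_injective U.subtype_injective M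

end IsCompleteClass

section XMaximal

variable {X : GroupClass} {G Q : Type} [Group G] [Group Q] [Finite G]

theorem exists_isXMaximal_le {U : Subgroup G} (hU : X U) :
    ∃ H : Subgroup G, IsXMaximal X H ∧ U ≤ H := by
  obtain ⟨H, hUH, hH⟩ := (Set.toFinite {V : Subgroup G | X V}).exists_le_maximal hU
  exact ⟨H, ⟨hH.prop, fun K hK hHK => le_antisymm hHK (hH.le_of_ge hK hHK)⟩, hUH⟩

/-- Supplement `K` by an `𝔛`-subgroup of its preimage and enlarge that to an `𝔛`-maximal
subgroup, whose image is then forced by maximality. -/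
theorem exists_isXMaximal_map_eq (hX : IsCompleteClass X) {φ : G →* Q}
    (hφ : Function.Surjective φ) {K : Subgroup Q} (hK : IsXMaximal X K) :
    ∃ H : Subgroup G, IsXMaximal X H ∧ H.map φ = K := by
  obtain ⟨U, hUX, hUK⟩ :=
    hX.exists_map_eq_top (φ.subgroupComap_surjective_of_surjective K hφ) hK.1
  obtain ⟨H, hH, hUH⟩ := exists_isXMaximal_le (hX.map (K.comap φ).subtype hUX)
  refine ⟨H, hH, (hK.2 _ (hX.map φ hH.1) ?_).symm⟩
  calc K = (U.map (φ.subgroupComap K)).map K.subtype := by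
        rw [hUK, ← MonoidHom.range_eq_map, Subgroup.range_subtype]
    _ = (U.map (K.comap φ).subtype).map φ := by rw [Subgroup.map_map, Subgroup.map_map]; rfl
    _ ≤ H.map φ := Subgroup.map_mono hUH

theorem IsXMaximal.map_mulEquiv (hX : IsCompleteClass X) {H : Subgroup G}
    (hH : IsXMaximal X H) (e : G ≃* Q) : IsXMaximal X (H.map e.toMonoidHom) := by
  have : Finite Q := Finite.of_equiv G e.toEquiv
  refine ⟨hX.map _ hH.1, fun K hK hHK => ?_⟩
  have hKX : X (K.comap e.toMonoidHom) := by
    rw [Subgroup.comap_equiv_eq_map_symm']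
    exact hX.map _ hK
  rw [hH.2 _ hKX (Subgroup.map_le_iff_le_comap.mp hHK)]
  exact Subgroup.map_comap_eq_self_of_surjective e.surjective K

end XMaximal

section Conjugacy

variable {G Q : Type} [Group G] [Group Q]

theorem conjSub_mul (a b : G) (H : Subgroup G) :
    conjSub (a * b) H = conjSub a (conjSub b H) := by
  rw [conjSub, conjSub, conjSub, Subgroup.map_map, map_mul]
  rfl

theorem conjSub_one (H : Subgroup G) : conjSub 1 H = H := by
  rw [conjSub, map_one]
  exact Subgroup.map_id H

theorem conjSub_map (f : G →* Q) (g : G) (H : Subgroup G) :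
    (conjSub g H).map f = conjSub (f g) (H.map f) := by
  rw [conjSub, conjSub, Subgroup.map_map, Subgroup.map_map]
  congr 1
  ext x
  simp

def conjClass (H : Subgroup G) : Set (Subgroup G) :=
  {K | ∃ g : G, K = conjSub g H}

theorem conjClass_eq_iff {H L : Subgroup G} :
    conjClass H = conjClass L ↔ ∃ g : G, conjSub g H = L := by
  constructor
  · intro hHL
    have hL : L ∈ conjClass H := hHL ▸ ⟨1, (conjSub_one L).symm⟩
    obtain ⟨g, hg⟩ := hL
    exact ⟨g, hg.symm⟩
  · rintro ⟨g, rfl⟩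
    ext K
    constructor
    · rintro ⟨a, rfl⟩
      exact ⟨a * g⁻¹, by rw [conjSub_mul, ← conjSub_mul g⁻¹, inv_mul_cancel, conjSub_one]⟩
    · rintro ⟨a, rfl⟩
      exact ⟨a * g, (conjSub_mul a g H).symm⟩

theorem conjClass_map_eq {H L : Subgroup G} (f : G →* Q) (hHL : conjClass H = conjClass L) :
    conjClass (H.map f) = conjClass (L.map f) := by
  obtain ⟨g, rfl⟩ := conjClass_eq_iff.mp hHL
  exact conjClass_eq_iff.mpr ⟨f g, (conjSub_map f g H).symm⟩

theorem numClasses_eq_ncard (S : Set (Subgroup G)) : numClasses S = (conjClass '' S).ncard := by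
  rw [← Nat.card_coe_set_eq]
  exact Nat.card_congr (Equiv.subtypeEquivRight fun C => by simp [conjClass, eq_comm])

end Conjugacy

/-- The classes of those `a ∈ S` with `m a ∈ T` map onto the classes of `T`; equal class counts
force this surjection to be a bijection and those `a` to exhaust `S`. -/
theorem mapsTo_and_class_injOn_of_ncard_image_eq {α β γ δ : Type*} (c : α → γ) (d : β → δ)
    (m : α → β) {S : Set α} {T : Set β} (hm : ∀ a a', c a = c a' → d (m a) = d (m a'))
    (hT : ∀ b b', d b = d b' → b ∈ T → b' ∈ T) (hlift : ∀ b ∈ T, ∃ a ∈ S, m a = b)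
    (hfin : (c '' S).Finite) (hcard : (c '' S).ncard = (d '' T).ncard) :
    Set.MapsTo m S T ∧ ∀ a ∈ S, ∀ a' ∈ S, d (m a) = d (m a') → c a = c a' := by
  rcases isEmpty_or_nonempty α with hα | hα
  · exact ⟨fun a => isEmptyElim a, fun a => isEmptyElim a⟩
  set S' := S ∩ m ⁻¹' T
  set h : γ → δ := fun x => d (m (Function.invFunOn c S' x))
  have h_c : ∀ a ∈ S', h (c a) = d (m a) := fun a ha =>
    hm _ _ (Function.invFunOn_eq ⟨a, ha, rfl⟩)
  have himage : h '' (c '' S') = d '' T := by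
    ext y
    constructor
    · rintro ⟨_, ⟨a, ha, rfl⟩, rfl⟩
      exact ⟨m a, ha.2, (h_c a ha).symm⟩
    · rintro ⟨b, hb, rfl⟩
      obtain ⟨a, haS, rfl⟩ := hlift b hb
      exact ⟨c a, ⟨a, ⟨haS, hb⟩, rfl⟩, h_c a ⟨haS, hb⟩⟩
  have hsub : c '' S' ⊆ c '' S := Set.image_mono Set.inter_subset_left
  have hfin' := hfin.subset hsub
  have hle₁ : (d '' T).ncard ≤ (c '' S').ncard := himage ▸ Set.ncard_image_le hfin'
  have hle₂ : (c '' S').ncard ≤ (c '' S).ncard := Set.ncard_le_ncard hsub hfin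
  have hclasses : c '' S' = c '' S := Set.eq_of_subset_of_ncard_le hsub (by omega) hfin
  have hinj : Set.InjOn h (c '' S') := Set.injOn_of_ncard_image_eq (by rw [himage]; omega) hfin'
  have hS' : ∀ a ∈ S, a ∈ S' := fun a ha => by
    obtain ⟨a', ha', hca⟩ := hclasses ▸ Set.mem_image_of_mem c ha
    exact ⟨ha, hT _ _ (hm _ _ hca) ha'.2⟩
  refine ⟨fun a ha => (hS' a ha).2, fun a ha a' ha' hd => hinj (Set.mem_image_of_mem c (hS' a ha))
    (Set.mem_image_of_mem c (hS' a' ha')) ?_⟩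
  rw [h_c a (hS' a ha), h_c a' (hS' a' ha'), hd]

/-- If `k_𝔛(G) = k_𝔛(G/N)` then: (1) images of `𝔛`-maximal subgroups of `G` are `𝔛`-maximal
in `G/N`; (2) every `𝔛`-maximal subgroup of `G/N` is such an image; (3) two `𝔛`-maximal
subgroups of `G` are conjugate in `G` iff their images are conjugate in `G/N` (so
`H ↦ HN/N` induces a bijection between the conjugacy classes of `𝔛`-maximal subgroups). -/
theorem kX_quotient_eq_natural_bijection (X : GroupClass) (hXc : IsCompleteClass X)
    (G : Type) [Group G] [Finite G] (N : Subgroup G) [N.Normal]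
    (h : kX X G = kX X (G ⧸ N)) :
    (∀ H : Subgroup G, IsXMaximal X H → IsXMaximal X (H.map (QuotientGroup.mk' N))) ∧
    (∀ K : Subgroup (G ⧸ N), IsXMaximal X K →
      ∃ H : Subgroup G, IsXMaximal X H ∧ K = H.map (QuotientGroup.mk' N)) ∧
    (∀ H L : Subgroup G, IsXMaximal X H → IsXMaximal X L →
      ((∃ g : G, conjSub g H = L) ↔
        ∃ q : G ⧸ N, conjSub q (H.map (QuotientGroup.mk' N)) = L.map (QuotientGroup.mk' N))) := by
  set π := QuotientGroup.mk' N
  have hπ : Function.Surjective π := QuotientGroup.mk'_surjective N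
  have hlift : ∀ K : Subgroup (G ⧸ N), IsXMaximal X K → ∃ H, IsXMaximal X H ∧ H.map π = K :=
    fun K hK => exists_isXMaximal_map_eq hXc hπ hK
  obtain ⟨hmaps, hinj⟩ := mapsTo_and_class_injOn_of_ncard_image_eq conjClass conjClass
    (fun H => H.map π) (S := {H | IsXMaximal X H}) (T := {K | IsXMaximal X K})
    (fun H L => conjClass_map_eq π)
    (fun K L hKL hK => by
      obtain ⟨q, rfl⟩ := conjClass_eq_iff.mp hKL
      exact hK.map_mulEquiv hXc (MulAut.conj q))
    hlift (Set.toFinite _) (by rw [← numClasses_eq_ncard, ← numClasses_eq_ncard]; exact h)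
  refine ⟨hmaps, fun K hK => ?_, fun H L hH hL => ⟨?_, fun hq => ?_⟩⟩
  · obtain ⟨H, hH, rfl⟩ := hlift K hK
    exact ⟨H, hH, rfl⟩
  · rintro ⟨g, rfl⟩
    exact ⟨π g, (conjSub_map π g H).symm⟩
  · exact conjClass_eq_iff.mp (hinj H hH L hL (conjClass_eq_iff.mpr hq))
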